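/- arXiv:2504.18710 — 4 statements merged into one kernel-verified Lean document; each statement's English description precedes it below -/
import Mathlib

section
/- Let W : ℝⁿ → ℝᵐ be a surjective linear map with Moore–Penrose pseudoinverse W⁺, let b = -Wp for some p ∈ ℝⁿ, and set vᵢ = W⁺(eᵢ) for i = 1,…,m where eᵢ is the standard basis of ℝᵐ. Then for any x ∈ ℝⁿ written as x = p + x̃ + Σᵢ aᵢ vᵢ with x̃ ∈ ker W, the truncation map satisfies τ_{W,b}(x) = W⁺W p + Σ_{i : aᵢ > 0} aᵢ vᵢ. -/
/-! Since `W vᵢ = eᵢ` and `W` kills `x̃`, the preactivation `W x + b` is the coefficient vector `a`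
itself; the ReLU keeps its positive entries, and applying `W⁺` turns `eᵢ` back into `vᵢ`. -/

noncomputable section

/-- Componentwise ReLU. -/
def relu {m : ℕ} (y : EuclideanSpace ℝ (Fin m)) : EuclideanSpace ℝ (Fin m) :=
  WithLp.toLp 2 (fun i => max (y i) 0)

/-- Truncation map τ_{W,b}(x) = W⁺(σ(Wx + b) - b), with `Wp` playing the role of W⁺. -/
def trunc {n m : ℕ} (W : EuclideanSpace ℝ (Fin n) →ₗ[ℝ] EuclideanSpace ℝ (Fin m))
    (Wp : EuclideanSpace ℝ (Fin m) →ₗ[ℝ] EuclideanSpace ℝ (Fin n))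
    (b : EuclideanSpace ℝ (Fin m)) (x : EuclideanSpace ℝ (Fin n)) :
    EuclideanSpace ℝ (Fin n) :=
  Wp (relu (W x + b) - b)

theorem sum_max_zero_smul_eq_sum_filter_pos {ι M : Type*} [Fintype ι] [AddCommMonoid M]
    [Module ℝ M] (a : ι → ℝ) (v : ι → M) :
    ∑ i, max (a i) 0 • v i = ∑ i ∈ Finset.univ.filter (fun i => 0 < a i), a i • v i := by
  rw [Finset.sum_filter]
  refine Finset.sum_congr rfl fun i _ => ?_
  split_ifs with h
  · rw [max_eq_left h.le]
  · rw [max_eq_right (not_lt.mp h), zero_smul]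

theorem relu_sum_smul_single {m : ℕ} (a : Fin m → ℝ) :
    relu (∑ i, a i • EuclideanSpace.single i (1 : ℝ)) =
      ∑ i, max (a i) 0 • EuclideanSpace.single i (1 : ℝ) := by
  ext j
  simp [relu, Pi.single_apply]

theorem trunc_eq_of_decomp_general {n m : ℕ}
    (W : EuclideanSpace ℝ (Fin n) →ₗ[ℝ] EuclideanSpace ℝ (Fin m))
    (Wp : EuclideanSpace ℝ (Fin m) →ₗ[ℝ] EuclideanSpace ℝ (Fin n))
    -- Wp is the Moore–Penrose pseudoinverse of the surjective W:
    (hWWp : ∀ y, W (Wp y) = y)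
    (p : EuclideanSpace ℝ (Fin n)) (b : EuclideanSpace ℝ (Fin m)) (hb : b = -(W p))
    (v : Fin m → EuclideanSpace ℝ (Fin n))
    (hv : ∀ i, v i = Wp (EuclideanSpace.single i (1 : ℝ)))
    (x xt : EuclideanSpace ℝ (Fin n)) (hxt : xt ∈ LinearMap.ker W)
    (a : Fin m → ℝ)
    (hx : x = p + xt + ∑ i, a i • v i) :
    trunc W Wp b x =
      Wp (W p) + ∑ i ∈ Finset.univ.filter (fun i => 0 < a i), a i • v i := by
  have hWv : ∀ i, W (v i) = EuclideanSpace.single i (1 : ℝ) := fun i => hv i ▸ hWWp _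
  have hpre : W x + b = ∑ i, a i • EuclideanSpace.single i (1 : ℝ) := by
    rw [hx, hb, map_add, map_add, LinearMap.mem_ker.mp hxt, map_sum]
    simp only [map_smul, hWv]
    abel
  rw [trunc, hpre, relu_sum_smul_single, hb, sub_neg_eq_add, map_add, map_sum]
  simp only [map_smul, ← hv]
  rw [sum_max_zero_smul_eq_sum_filter_pos, add_comm]

/-- action of the truncation map (Lemma, first formula). -/
theorem trunc_eq_of_decomp {n m : ℕ}
    (W : EuclideanSpace ℝ (Fin n) →ₗ[ℝ] EuclideanSpace ℝ (Fin m))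
    (hW : Function.Surjective W)
    (Wp : EuclideanSpace ℝ (Fin m) →ₗ[ℝ] EuclideanSpace ℝ (Fin n))
    -- Wp is the Moore–Penrose pseudoinverse of the surjective W:
    (hWWp : ∀ y, W (Wp y) = y)
    (hproj : ∀ x, Wp (W x) =
      (Submodule.orthogonalProjectionOnto (LinearMap.ker W)ᗮ x : EuclideanSpace ℝ (Fin n)))
    (p : EuclideanSpace ℝ (Fin n)) (b : EuclideanSpace ℝ (Fin m)) (hb : b = -(W p))
    (v : Fin m → EuclideanSpace ℝ (Fin n))
    (hv : ∀ i, v i = Wp (EuclideanSpace.single i (1 : ℝ)))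
    (x xt : EuclideanSpace ℝ (Fin n)) (hxt : xt ∈ LinearMap.ker W)
    (a : Fin m → ℝ)
    (hx : x = p + xt + ∑ i, a i • v i) :
    trunc W Wp b x =
      Wp (W p) + ∑ i ∈ Finset.univ.filter (fun i => 0 < a i), a i • v i :=
  trunc_eq_of_decomp_general W Wp hWWp p b hb v hv x xt hxt a hx
end
end

section
/- Let W : ℝⁿ → ℝᵐ be surjective, b = -Wp, and vᵢ = W⁺(eᵢ). For x = p + x̃ + Σᵢ aᵢ vᵢ with x̃ ∈ ker W, the truncation map satisfies τ_{W,b}(x) = W⁺W x - Σ_{j : aⱼ ≤ 0} aⱼ vⱼ. -/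
/-! Since `W W⁺ = id` and `W p = -b`, the pre-activation `W x + b` has coordinates exactly `aᵢ`.
ReLU removes the nonpositive ones, i.e. subtracts `∑_{aⱼ ≤ 0} aⱼ eⱼ`, and `W⁺` maps `eⱼ` to `vⱼ`. -/

noncomputable section

lemma EuclideanSpace.sum_smul_single_one {𝕜 ι : Type*} [RCLike 𝕜] [Fintype ι] [DecidableEq ι]
    (a : ι → 𝕜) : ∑ i, a i • EuclideanSpace.single i (1 : 𝕜) = WithLp.toLp 2 a := by
  ext j
  simp [Pi.single_apply]

lemma relu_eq_sub_sum_filter_nonpos {m : ℕ} (y : EuclideanSpace ℝ (Fin m)) :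
    relu y =
      y - ∑ j ∈ Finset.univ.filter (fun j => y j ≤ 0), y j • EuclideanSpace.single j (1 : ℝ) := by
  ext i
  by_cases h : y i ≤ 0 <;> simp [relu, Pi.single_apply, h, le_of_not_ge]

lemma trunc_eq_sub_sum_filter_nonpos {n m : ℕ}
    (W : EuclideanSpace ℝ (Fin n) →ₗ[ℝ] EuclideanSpace ℝ (Fin m))
    (Wp : EuclideanSpace ℝ (Fin m) →ₗ[ℝ] EuclideanSpace ℝ (Fin n))
    (b : EuclideanSpace ℝ (Fin m)) (x : EuclideanSpace ℝ (Fin n)) {a : Fin m → ℝ}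
    (h : W x + b = WithLp.toLp 2 a) :
    trunc W Wp b x = Wp (W x) -
      ∑ j ∈ Finset.univ.filter (fun j => a j ≤ 0), a j • Wp (EuclideanSpace.single j 1) := by
  have hcoord (j : Fin m) : (W x + b) j = a j := by rw [h]
  rw [trunc, relu_eq_sub_sum_filter_nonpos, sub_right_comm, add_sub_cancel_right]
  simp only [hcoord, map_sub, map_sum, map_smul]

theorem trunc_eq_of_decomp'_general {n m : ℕ}
    (W : EuclideanSpace ℝ (Fin n) →ₗ[ℝ] EuclideanSpace ℝ (Fin m))
    (Wp : EuclideanSpace ℝ (Fin m) →ₗ[ℝ] EuclideanSpace ℝ (Fin n))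
    (hWWp : ∀ y, W (Wp y) = y)
    (p : EuclideanSpace ℝ (Fin n)) (b : EuclideanSpace ℝ (Fin m)) (hb : b = -(W p))
    (v : Fin m → EuclideanSpace ℝ (Fin n))
    (hv : ∀ i, v i = Wp (EuclideanSpace.single i (1 : ℝ)))
    (x xt : EuclideanSpace ℝ (Fin n)) (hxt : xt ∈ LinearMap.ker W)
    (a : Fin m → ℝ)
    (hx : x = p + xt + ∑ i, a i • v i) :
    trunc W Wp b x =
      Wp (W x) - ∑ j ∈ Finset.univ.filter (fun j => a j ≤ 0), a j • v j := by
  have hWxb : W x + b = WithLp.toLp 2 a := by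
    rw [hx, hb, ← EuclideanSpace.sum_smul_single_one]
    simp only [map_add, map_sum, map_smul, LinearMap.mem_ker.mp hxt, hv, hWWp]
    abel
  simp only [trunc_eq_sub_sum_filter_nonpos W Wp b x hWxb, hv]

/-- action of the truncation map (Lemma, second formula). -/
theorem trunc_eq_of_decomp' {n m : ℕ}
    (W : EuclideanSpace ℝ (Fin n) →ₗ[ℝ] EuclideanSpace ℝ (Fin m))
    (hW : Function.Surjective W)
    (Wp : EuclideanSpace ℝ (Fin m) →ₗ[ℝ] EuclideanSpace ℝ (Fin n))
    (hWWp : ∀ y, W (Wp y) = y)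
    (hproj : ∀ x, Wp (W x) =
      (Submodule.orthogonalProjectionOnto (LinearMap.ker W)ᗮ x : EuclideanSpace ℝ (Fin n)))
    (p : EuclideanSpace ℝ (Fin n)) (b : EuclideanSpace ℝ (Fin m)) (hb : b = -(W p))
    (v : Fin m → EuclideanSpace ℝ (Fin n))
    (hv : ∀ i, v i = Wp (EuclideanSpace.single i (1 : ℝ)))
    (x xt : EuclideanSpace ℝ (Fin n)) (hxt : xt ∈ LinearMap.ker W)
    (a : Fin m → ℝ)
    (hx : x = p + xt + ∑ i, a i • v i) :
    trunc W Wp b x =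
      Wp (W x) - ∑ j ∈ Finset.univ.filter (fun j => a j ≤ 0), a j • v j :=
  trunc_eq_of_decomp'_general W Wp hWWp p b hb v hv x xt hxt a hx
end
end

section
/- Consider a feedforward ReLU network x⁽⁰⁾ = x, x⁽ˡ⁾ = σ(W_ℓ x⁽ˡ⁻¹⁾ + b_ℓ) for ℓ = 1,…,L−1, x⁽ᴸ⁾ = W_L x⁽ᴸ⁻¹⁾ + b_L, where all W_ℓ : ℝ^{d_{ℓ−1}} → ℝ^{d_ℓ} are surjective. Define cumulative parameters W⁽¹⁾ = W₁, W⁽ˡ⁾ = W_ℓ W⁽ˡ⁻¹⁾, b⁽¹⁾ = b₁, b⁽ˡ⁾ = W_ℓ b⁽ˡ⁻¹⁾ + b_ℓ, and truncated iterates x⁽ᵗ,⁰⁾ = x, x⁽ᵗ,ˡ⁾ = τ_{W⁽ˡ⁾, b⁽ˡ⁾}(x⁽ᵗ,ˡ⁻¹⁾). Then x⁽ˡ⁾ = W⁽ˡ⁾ x⁽ᵗ,ˡ⁾ + b⁽ˡ⁾ for ℓ = 1,…,L−1, and x⁽ᴸ⁾ = W⁽ᴸ⁾ x⁽ᵗ,ᴸ⁻¹⁾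 + b⁽ᴸ⁾. -/
noncomputable section

/-!
Since W⁽ˡ⁾ (W⁽ˡ⁾)⁺ = Id, applying W⁽ˡ⁾ to a truncation step and adding b⁽ˡ⁾ undoes the
pseudoinverse: W⁽ˡ⁾ τ(y) + b⁽ˡ⁾ = σ(W⁽ˡ⁾ y + b⁽ˡ⁾). As W⁽ˡ⁺¹⁾ = W_{ℓ+1} W⁽ˡ⁾ and
b⁽ˡ⁺¹⁾ = W_{ℓ+1} b⁽ˡ⁾ + b_{ℓ+1}, induction on ℓ shows that every preactivation
W_ℓ x⁽ˡ⁻¹⁾ + b_ℓ of the network equals W⁽ˡ⁾ x⁽ᵗ,ˡ⁻¹⁾ + b⁽ˡ⁾, from which both formulas follow.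
-/

section Truncation

variable {n m : ℕ} {W : EuclideanSpace ℝ (Fin n) →ₗ[ℝ] EuclideanSpace ℝ (Fin m)}
  {Wp : EuclideanSpace ℝ (Fin m) →ₗ[ℝ] EuclideanSpace ℝ (Fin n)}

theorem apply_trunc_add (hWp : Function.RightInverse Wp W) (b : EuclideanSpace ℝ (Fin m))
    (x : EuclideanSpace ℝ (Fin n)) : W (trunc W Wp b x) + b = relu (W x + b) := by
  rw [trunc, hWp, sub_add_cancel]

theorem comp_apply_trunc_add {k : ℕ}
    (V : EuclideanSpace ℝ (Fin m) →ₗ[ℝ] EuclideanSpace ℝ (Fin k))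
    (hWp : Function.RightInverse Wp W) (b : EuclideanSpace ℝ (Fin m))
    (c : EuclideanSpace ℝ (Fin k)) (x : EuclideanSpace ℝ (Fin n)) :
    V.comp W (trunc W Wp b x) + (V b + c) = V (relu (W x + b)) + c := by
  rw [LinearMap.comp_apply, ← add_assoc, ← map_add, apply_trunc_add hWp]

end Truncation

/-- The network has L = M + 1 layers; the paper's layer ℓ has index ℓ - 1 here. -/
theorem network_eq_truncations_general {M : ℕ} (d : ℕ → ℕ)
    (W : ∀ ℓ : ℕ, EuclideanSpace ℝ (Fin (d ℓ)) →ₗ[ℝ] EuclideanSpace ℝ (Fin (d (ℓ + 1))))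
    (b : ∀ ℓ : ℕ, EuclideanSpace ℝ (Fin (d (ℓ + 1))))
    -- cumulative weights W⁽ˡ⁾ and biases b⁽ˡ⁾:
    (Wc : ∀ ℓ : ℕ, EuclideanSpace ℝ (Fin (d 0)) →ₗ[ℝ] EuclideanSpace ℝ (Fin (d (ℓ + 1))))
    (bc : ∀ ℓ : ℕ, EuclideanSpace ℝ (Fin (d (ℓ + 1))))
    (hWc0 : Wc 0 = W 0) (hWcS : ∀ ℓ, Wc (ℓ + 1) = (W (ℓ + 1)).comp (Wc ℓ))
    (hbc0 : bc 0 = b 0) (hbcS : ∀ ℓ, bc (ℓ + 1) = W (ℓ + 1) (bc ℓ) + b (ℓ + 1))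
    -- Moore–Penrose pseudoinverses of the cumulative weights:
    (Wpc : ∀ ℓ : ℕ, EuclideanSpace ℝ (Fin (d (ℓ + 1))) →ₗ[ℝ] EuclideanSpace ℝ (Fin (d 0)))
    (hWpc₁ : ∀ ℓ ≤ M, ∀ y, Wc ℓ (Wpc ℓ y) = y)
    -- the input, the layer outputs x⁽ˡ⁾, and the truncated iterates x⁽ᵗ'ˡ⁾:
    (x : EuclideanSpace ℝ (Fin (d 0)))
    (xl : ∀ ℓ : ℕ, EuclideanSpace ℝ (Fin (d ℓ)))
    (hxl0 : xl 0 = x)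
    (hxlS : ∀ ℓ : ℕ, ℓ + 1 ≤ M → xl (ℓ + 1) = relu (W ℓ (xl ℓ) + b ℓ))
    (xt : ∀ ℓ : ℕ, EuclideanSpace ℝ (Fin (d 0)))
    (hxt0 : xt 0 = x)
    (hxtS : ∀ ℓ : ℕ, ℓ + 1 ≤ M → xt (ℓ + 1) = trunc (Wc ℓ) (Wpc ℓ) (bc ℓ) (xt ℓ)) :
    -- x⁽ˡ⁾ = W⁽ˡ⁾ x⁽ᵗ'ˡ⁾ + b⁽ˡ⁾ for the hidden layers, and the analogous final formula:
    (∀ ℓ : ℕ, ℓ + 1 ≤ M → xl (ℓ + 1) = Wc ℓ (xt (ℓ + 1)) + bc ℓ) ∧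
    W M (xl M) + b M = Wc M (xt M) + bc M := by
  have preact : ∀ ℓ ≤ M, W ℓ (xl ℓ) + b ℓ = Wc ℓ (xt ℓ) + bc ℓ := by
    intro ℓ
    induction ℓ with
    | zero => intro _; rw [hxl0, hxt0, hWc0, hbc0]
    | succ n ih =>
      intro hn
      rw [hxlS n hn, ih (by omega), hWcS, hbcS, hxtS n hn,
        comp_apply_trunc_add _ (hWpc₁ n (by omega))]
  refine ⟨fun ℓ hℓ => ?_, preact M le_rfl⟩
  rw [hxlS ℓ hℓ, preact ℓ (by omega), hxtS ℓ hℓ, apply_trunc_add (hWpc₁ ℓ (by omega))]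

/-- a feedforward ReLU network with surjective weights is described by
truncation maps and cumulative parameters. Here the network has L = M + 1 layers; weights
are indexed by ℓ = 0, …, M (so layer ℓ of the paper corresponds to index ℓ - 1). -/
theorem network_eq_truncations {M : ℕ} (d : ℕ → ℕ)
    (W : ∀ ℓ : ℕ, EuclideanSpace ℝ (Fin (d ℓ)) →ₗ[ℝ] EuclideanSpace ℝ (Fin (d (ℓ + 1))))
    (b : ∀ ℓ : ℕ, EuclideanSpace ℝ (Fin (d (ℓ + 1))))
    (hsurj : ∀ ℓ ≤ M, Function.Surjective (W ℓ))
    -- cumulative weights W⁽ˡ⁾ and biases b⁽ˡ⁾: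
    (Wc : ∀ ℓ : ℕ, EuclideanSpace ℝ (Fin (d 0)) →ₗ[ℝ] EuclideanSpace ℝ (Fin (d (ℓ + 1))))
    (bc : ∀ ℓ : ℕ, EuclideanSpace ℝ (Fin (d (ℓ + 1))))
    (hWc0 : Wc 0 = W 0) (hWcS : ∀ ℓ, Wc (ℓ + 1) = (W (ℓ + 1)).comp (Wc ℓ))
    (hbc0 : bc 0 = b 0) (hbcS : ∀ ℓ, bc (ℓ + 1) = W (ℓ + 1) (bc ℓ) + b (ℓ + 1))
    -- Moore–Penrose pseudoinverses of the cumulative weights: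
    (Wpc : ∀ ℓ : ℕ, EuclideanSpace ℝ (Fin (d (ℓ + 1))) →ₗ[ℝ] EuclideanSpace ℝ (Fin (d 0)))
    (hWpc₁ : ∀ ℓ ≤ M, ∀ y, Wc ℓ (Wpc ℓ y) = y)
    (hWpc₂ : ∀ ℓ ≤ M, ∀ x, Wpc ℓ (Wc ℓ x) =
      (Submodule.orthogonalProjection (LinearMap.ker (Wc ℓ))ᗮ x : EuclideanSpace ℝ (Fin (d 0))))
    -- the input, the layer outputs x⁽ˡ⁾, and the truncated iterates x⁽ᵗ'ˡ⁾:
    (x : EuclideanSpace ℝ (Fin (d 0)))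
    (xl : ∀ ℓ : ℕ, EuclideanSpace ℝ (Fin (d ℓ)))
    (hxl0 : xl 0 = x)
    (hxlS : ∀ ℓ : ℕ, ℓ + 1 ≤ M → xl (ℓ + 1) = relu (W ℓ (xl ℓ) + b ℓ))
    (xt : ∀ ℓ : ℕ, EuclideanSpace ℝ (Fin (d 0)))
    (hxt0 : xt 0 = x)
    (hxtS : ∀ ℓ : ℕ, ℓ + 1 ≤ M → xt (ℓ + 1) = trunc (Wc ℓ) (Wpc ℓ) (bc ℓ) (xt ℓ)) :
    -- x⁽ˡ⁾ = W⁽ˡ⁾ x⁽ᵗ'ˡ⁾ + b⁽ˡ⁾ for the hidden layers, and the analogous final formula: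
    (∀ ℓ : ℕ, ℓ + 1 ≤ M → xl (ℓ + 1) = Wc ℓ (xt (ℓ + 1)) + bc ℓ) ∧
    W M (xl M) + b M = Wc M (xt M) + bc M :=
  network_eq_truncations_general d W b Wc bc hWc0 hWcS hbc0 hbcS Wpc hWpc₁ x xl hxl0 hxlS xt hxt0
    hxtS
end
end

section
/- Let 𝒳 = 𝒳₁ ∪ 𝒳₂ ⊂ ℝⁿ be disjoint finite sets, p ∈ ℝⁿ, and (vᵢ)_{i=1}^m linearly independent vectors with m ≤ n. Suppose 𝒳₁ ⊂ 𝒮₋(p, v) = {p + Σᵢ aᵢ vᵢ + ṽ : all aᵢ ≤ 0, ṽ ∈ (span vᵢ)^⊥} and 𝒳₂ ∩ 𝒮₋(p, v) = ∅. Then there exist a surjective W ∈ ℝ^{m×n} and b ∈ ℝᵐ such that the truncated sets τ_{W,b}(𝒳₁) and τ_{W,b}(𝒳₂) are linearly separable: there exist u ∈ ℝⁿ, c ∈ ℝ with ⟨u, τ_{W,b}(x)⟩ < c for all x ∈ 𝒳₁ and ⟨u, τ_{W,b}(x)⟩ > c for all x ∈ 𝒳₂. -/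
/-!
Let `W x` be the coordinates, in the basis `v`, of the orthogonal projection of `x` onto
`span v`, and `W⁺ y = ∑ yᵢ vᵢ`. With `b = -W p`, the point `x` lies in the cone `𝒮₋(p, v)` exactly
when `W x + b = W (x - p)` has no positive coordinate. Since `W W⁺ = id`, the functional
`u = Wᵀ 𝟙` gives `⟪u, τ x⟫ = ∑ᵢ max (W (x - p))ᵢ 0 + ∑ᵢ (W p)ᵢ`, which equals `∑ᵢ (W p)ᵢ` on the cone
and is strictly larger off it; finiteness of `𝒳₂` leaves room for a threshold.
-/

noncomputable section

open Set Submodule RealInnerProductSpace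

theorem Set.Finite.exists_gt_and_forall_lt {α β : Type*} [LinearOrder β] [TopologicalSpace β]
    [OrderTopology β] [DenselyOrdered β] [NoMaxOrder β] {s : Set α} (hs : s.Finite)
    {f : α → β} {a : β} (h : ∀ x ∈ s, a < f x) : ∃ c, a < c ∧ ∀ x ∈ s, c < f x :=
  ((eventually_mem_nhdsWithin (a := a) (s := Ioi a)).and <| (hs.eventually_all).2 fun x hx =>
    nhdsWithin_le_nhds (eventually_lt_nhds (h x hx))).exists

section SpanCoordinates

variable {E ι : Type*} [NormedAddCommGroup E] [InnerProductSpace ℝ E] [Fintype ι]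

def spanCombination (v : ι → E) : EuclideanSpace ℝ ι →ₗ[ℝ] E :=
  Fintype.linearCombination ℝ v ∘ₗ (WithLp.linearEquiv 2 ℝ (ι → ℝ)).toLinearMap

theorem spanCombination_apply (v : ι → E) (y : EuclideanSpace ℝ ι) :
    spanCombination v y = ∑ i, y i • v i :=
  Fintype.linearCombination_apply ℝ v _

variable {v : ι → E} (hv : LinearIndependent ℝ v)

theorem spanCombination_eq_coe_basis_span (y : EuclideanSpace ℝ ι) :
    spanCombination v y = (Module.Basis.span hv).equivFun.symm y.ofLp := by
  simp [spanCombination_apply, Module.Basis.equivFun_symm_apply, Module.Basis.span_apply]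

variable [FiniteDimensional ℝ E]

def spanCoords : E →ₗ[ℝ] EuclideanSpace ℝ ι :=
  (WithLp.linearEquiv 2 ℝ (ι → ℝ)).symm.toLinearMap ∘ₗ (Module.Basis.span hv).equivFun.toLinearMap
    ∘ₗ (span ℝ (range v)).orthogonalProjectionOnto.toLinearMap

theorem spanCoords_apply (x : E) : spanCoords hv x =
    WithLp.toLp 2 ((Module.Basis.span hv).equivFun ((span ℝ (range v)).orthogonalProjectionOnto x)) :=
  rfl

theorem spanCoords_spanCombination (y : EuclideanSpace ℝ ι) :
    spanCoords hv (spanCombination v y) = y := by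
  rw [spanCoords_apply, spanCombination_eq_coe_basis_span hv,
    orthogonalProjectionOnto_mem_subspace_eq_self, LinearEquiv.apply_symm_apply, WithLp.toLp_ofLp]

theorem spanCombination_spanCoords (x : E) :
    spanCombination v (spanCoords hv x) = (span ℝ (range v)).starProjection x := by
  rw [spanCoords_apply, spanCombination_eq_coe_basis_span hv, WithLp.ofLp_toLp,
    LinearEquiv.symm_apply_apply, starProjection_apply]

theorem ker_spanCoords : LinearMap.ker (spanCoords hv) = (span ℝ (range v))ᗮ := by
  simp [spanCoords, LinearEquiv.ker_comp, ker_orthogonalProjectionOnto]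

def negCone (p : E) (v : ι → E) : Set E :=
  {y | ∃ (a : ι → ℝ) (vt : E), (∀ i, a i ≤ 0) ∧ vt ∈ (span ℝ (range v))ᗮ ∧
    y = p + (∑ i, a i • v i) + vt}

theorem mem_negCone_iff {p x : E} : x ∈ negCone p v ↔ ∀ i, spanCoords hv (x - p) i ≤ 0 := by
  constructor
  · rintro ⟨a, vt, ha, hvt, rfl⟩
    rw [← ker_spanCoords hv] at hvt
    have hxp : p + ∑ i, a i • v i + vt - p = spanCombination v (WithLp.toLp 2 a) + vt := by
      rw [spanCombination_apply]; abel
    simpa [hxp, spanCoords_spanCombination, LinearMap.mem_ker.1 hvt] using ha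
  · intro h
    refine ⟨spanCoords hv (x - p), x - p - (span ℝ (range v)).starProjection (x - p), h,
      sub_starProjection_mem_orthogonal _, ?_⟩
    rw [← spanCombination_spanCoords hv, spanCombination_apply]
    abel

end SpanCoordinates

section Truncation

variable {n m : ℕ}

theorem relu_apply (y : EuclideanSpace ℝ (Fin m)) (i : Fin m) : relu y i = max (y i) 0 :=
  rfl

theorem sum_relu_nonneg (y : EuclideanSpace ℝ (Fin m)) : 0 ≤ ∑ i, relu y i :=
  Finset.sum_nonneg fun _ _ => le_max_right _ _

theorem sum_relu_eq_zero_iff {y : EuclideanSpace ℝ (Fin m)} :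
    ∑ i, relu y i = 0 ↔ ∀ i, y i ≤ 0 := by
  simp only [relu_apply, Finset.sum_eq_zero_iff_of_nonneg fun i _ => le_max_right (y i) 0,
    Finset.mem_univ, true_implies, max_eq_right_iff]

variable {W : EuclideanSpace ℝ (Fin n) →ₗ[ℝ] EuclideanSpace ℝ (Fin m)}
  {Wp : EuclideanSpace ℝ (Fin m) →ₗ[ℝ] EuclideanSpace ℝ (Fin n)}

theorem map_trunc_eq_relu_sub (hW : ∀ y, W (Wp y) = y) (b : EuclideanSpace ℝ (Fin m))
    (x : EuclideanSpace ℝ (Fin n)) : W (trunc W Wp b x) = relu (W x + b) - b :=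
  hW _

theorem inner_adjoint_trunc (hW : ∀ y, W (Wp y) = y) (b : EuclideanSpace ℝ (Fin m))
    (x : EuclideanSpace ℝ (Fin n)) :
    ⟪LinearMap.adjoint W (WithLp.toLp 2 fun _ => 1), trunc W Wp b x⟫ =
      ∑ i, relu (W x + b) i - ∑ i, b i := by
  rw [LinearMap.adjoint_inner_left, map_trunc_eq_relu_sub hW, PiLp.inner_apply]
  simp [Finset.sum_sub_distrib]

end Truncation

theorem trunc_linearly_separable_general {n m : ℕ}
    (X₁ X₂ : Set (EuclideanSpace ℝ (Fin n)))
    (hX₂ : X₂.Finite)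
    (p : EuclideanSpace ℝ (Fin n)) (v : Fin m → EuclideanSpace ℝ (Fin n))
    (hv : LinearIndependent ℝ v)
    -- the cone 𝒮₋(p, v):
    (Sminus : Set (EuclideanSpace ℝ (Fin n)))
    (hS : Sminus = {y | ∃ (a : Fin m → ℝ) (vt : EuclideanSpace ℝ (Fin n)),
      (∀ i, a i ≤ 0) ∧ vt ∈ (Submodule.span ℝ (Set.range v))ᗮ ∧
      y = p + (∑ i, a i • v i) + vt})
    (hX₁S : X₁ ⊆ Sminus) (hX₂S : X₂ ∩ Sminus = ∅) :
    ∃ (W : EuclideanSpace ℝ (Fin n) →ₗ[ℝ] EuclideanSpace ℝ (Fin m))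
      (Wp : EuclideanSpace ℝ (Fin m) →ₗ[ℝ] EuclideanSpace ℝ (Fin n))
      (b : EuclideanSpace ℝ (Fin m)),
      Function.Surjective W ∧
      (∀ y, W (Wp y) = y) ∧
      (∀ x, Wp (W x) =
        (Submodule.orthogonalProjection (LinearMap.ker W)ᗮ x : EuclideanSpace ℝ (Fin n))) ∧
      ∃ (u : EuclideanSpace ℝ (Fin n)) (c : ℝ),
        (∀ x ∈ X₁, (inner ℝ u (trunc W Wp b x) : ℝ) < c) ∧
        (∀ x ∈ X₂, c < (inner ℝ u (trunc W Wp b x) : ℝ)) := by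
  change Sminus = negCone p v at hS
  subst hS
  set W := spanCoords hv
  have hW : ∀ y, W (spanCombination v y) = y := spanCoords_spanCombination hv
  set u := LinearMap.adjoint W (WithLp.toLp 2 fun _ => 1)
  have hinner : ∀ x, ⟪u, trunc W (spanCombination v) (-W p) x⟫ =
      ∑ i, relu (W (x - p)) i + ∑ i, W p i := by
    intro x
    simp [u, inner_adjoint_trunc hW, ← sub_eq_add_neg]
  have hX₁_eq : ∀ x ∈ X₁, ⟪u, trunc W (spanCombination v) (-W p) x⟫ = ∑ i, W p i := by
    intro x hx
    rw [hinner, sum_relu_eq_zero_iff.2 ((mem_negCone_iff hv).1 (hX₁S hx)), zero_add]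
  have hX₂_gt : ∀ x ∈ X₂, ∑ i, W p i < ⟪u, trunc W (spanCombination v) (-W p) x⟫ := by
    intro x hx
    have hx' : x ∉ negCone p v := fun h => eq_empty_iff_forall_notMem.1 hX₂S x ⟨hx, h⟩
    rw [hinner, lt_add_iff_pos_left]
    exact (sum_relu_nonneg _).lt_of_ne' (mt sum_relu_eq_zero_iff.1 (mt (mem_negCone_iff hv).2 hx'))
  obtain ⟨c, hc₀, hc⟩ := hX₂.exists_gt_and_forall_lt hX₂_gt
  refine ⟨W, spanCombination v, -W p, fun y => ⟨_, hW y⟩, hW, fun x => ?_, u, c,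
    fun x hx => (hX₁_eq x hx).trans_lt hc₀, hc⟩
  rw [← starProjection_apply, spanCombination_spanCoords hv]
  simp only [W, ker_spanCoords hv, orthogonal_orthogonal]

/-- data separated by a polyhedral cone becomes linearly separable after
one truncation map. -/
theorem trunc_linearly_separable {n m : ℕ} (hmn : m ≤ n)
    (X₁ X₂ : Set (EuclideanSpace ℝ (Fin n)))
    (hX₁ : X₁.Finite) (hX₂ : X₂.Finite) (hdisj : Disjoint X₁ X₂)
    (p : EuclideanSpace ℝ (Fin n)) (v : Fin m → EuclideanSpace ℝ (Fin n))
    (hv : LinearIndependent ℝ v)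
    -- the cone 𝒮₋(p, v):
    (Sminus : Set (EuclideanSpace ℝ (Fin n)))
    (hS : Sminus = {y | ∃ (a : Fin m → ℝ) (vt : EuclideanSpace ℝ (Fin n)),
      (∀ i, a i ≤ 0) ∧ vt ∈ (Submodule.span ℝ (Set.range v))ᗮ ∧
      y = p + (∑ i, a i • v i) + vt})
    (hX₁S : X₁ ⊆ Sminus) (hX₂S : X₂ ∩ Sminus = ∅) :
    ∃ (W : EuclideanSpace ℝ (Fin n) →ₗ[ℝ] EuclideanSpace ℝ (Fin m))
      (Wp : EuclideanSpace ℝ (Fin m) →ₗ[ℝ] EuclideanSpace ℝ (Fin n))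
      (b : EuclideanSpace ℝ (Fin m)),
      Function.Surjective W ∧
      (∀ y, W (Wp y) = y) ∧
      (∀ x, Wp (W x) =
        (Submodule.orthogonalProjection (LinearMap.ker W)ᗮ x : EuclideanSpace ℝ (Fin n))) ∧
      ∃ (u : EuclideanSpace ℝ (Fin n)) (c : ℝ),
        (∀ x ∈ X₁, (inner ℝ u (trunc W Wp b x) : ℝ) < c) ∧
        (∀ x ∈ X₂, c < (inner ℝ u (trunc W Wp b x) : ℝ)) :=
  trunc_linearly_separable_general X₁ X₂ hX₂ p v hv Sminus hS hX₁S hX₂S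
end
end
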